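/- For every real number a with 1/2 ≤ a < 5/8, the two-point distortion on J_2 = S_2([0,1]) = [1/2, 5/8] satisfies ∫_{J_2} min((x−a)², (x−5/8)²) dP(x) ≥ 2403/10465280, and equality holds if and only if a = 11/20 (the conditional expectation of P on J_{21} ∪ J_{22}). -/

import Mathlib

open MeasureTheory

noncomputable section

/-- The contractive similarity `S j x = x / 2^(j+1) + 1 - 1/2^(j-1)` (used for `j ≥ 1`). -/
def S (j : ℕ) (x : ℝ) : ℝ := x / 2 ^ (j + 1) + 1 - 1 / 2 ^ (j - 1)

/-- The similarity ratio `s j = 1/2^(j+1)`. -/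
def s (j : ℕ) : ℝ := 1 / 2 ^ (j + 1)

/-- The probability vector: `p 1 = 1/4`, `p j = 3/2^(j+1)` for `j ≥ 2`. -/
def p (j : ℕ) : ℝ := if j = 1 then 1 / 4 else 3 / 2 ^ (j + 1)

/-- `Sw ω = S_{ω_1} ∘ ⋯ ∘ S_{ω_k}`. -/
def Sw (ω : List ℕ) : ℝ → ℝ := ω.foldr (fun j f => S j ∘ f) id

/-- `pw ω = p_{ω_1} ⋯ p_{ω_k}`. -/
def pw (ω : List ℕ) : ℝ := (ω.map p).prod

/-- `sw ω = s_{ω_1} ⋯ s_{ω_k}`. -/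
def sw (ω : List ℕ) : ℝ := (ω.map s).prod

/-- The basic interval `J_ω = S_ω([0,1])`. -/
def Jw (ω : List ℕ) : Set ℝ := Sw ω '' Set.Icc 0 1

/-- The last letter of a word (junk value `0` for the empty word). -/
def wlast (ω : List ℕ) : ℕ := ω.getLastD 0

/-- `wext ω j = ω^-(ω_k + j)`: the word `ω` with its last letter increased by `j`. -/
def wext (ω : List ℕ) (j : ℕ) : List ℕ := ω.dropLast ++ [wlast ω + j]

/-- `J_{(ω,∞)} = ⋃_{j=1}^∞ J_{ω^-(ω_k+j)}`. -/
def Jinf (ω : List ℕ) : Set ℝ := ⋃ j : ℕ, Jw (wext ω (j + 1))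

/-- `a(ω) = S_ω(4/7)`. -/
def aw (ω : List ℕ) : ℝ := Sw ω (4 / 7)

/-- `a(ω,∞) = S_{ω^-(ω_k+1)}(4/7) + (8/7) s_{ω^-(ω_k+1)}`. -/
def ainf (ω : List ℕ) : ℝ := Sw (wext ω 1) (4 / 7) + (8 / 7) * sw (wext ω 1)

/-- A (nonempty) word over the alphabet `{1, 2, 3, …}`. -/
def IsWord (ω : List ℕ) : Prop := ω ≠ [] ∧ ∀ i ∈ ω, 1 ≤ i

/-- The invariance relation `P(A) = ∑_{j=1}^∞ p_j P(S_j⁻¹ A)`. -/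
def Invariant (P : Measure ℝ) : Prop :=
  ∀ A : Set ℝ, MeasurableSet A →
    P A = ∑' j : ℕ, ENNReal.ofReal (p (j + 1)) * P (S (j + 1) ⁻¹' A)

/-- The distortion error `∫ min_{a ∈ α} (x-a)² dP` of a set `α ⊆ ℝ`. -/
def distortion (P : Measure ℝ) (α : Set ℝ) : ℝ :=
  ∫ x, (⨅ a : α, (x - (a : ℝ)) ^ 2) ∂P

/-- The `n`-th quantization error for `P`. -/
def quantErr (P : Measure ℝ) (n : ℕ) : ℝ :=
  sInf {r : ℝ | ∃ α : Set ℝ, 1 ≤ α.ncard ∧ α.ncard ≤ n ∧ r = distortion P α}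

/-- `α` is an optimal set of `n`-means for `P`. -/
def IsOptimal (P : Measure ℝ) (n : ℕ) (α : Set ℝ) : Prop :=
  1 ≤ α.ncard ∧ α.ncard ≤ n ∧ distortion P α = quantErr P n

/-- `E(a(ω)) = ∫_{J_ω} (x - a(ω))² dP`. -/
def Ea (P : Measure ℝ) (ω : List ℕ) : ℝ := ∫ x in Jw ω, (x - aw ω) ^ 2 ∂P

/-- `E(a(ω,∞)) = ∫_{J_{(ω,∞)}} (x - a(ω,∞))² dP`. -/
def Eainf (P : Measure ℝ) (ω : List ℕ) : ℝ := ∫ x in Jinf ω, (x - ainf ω) ^ 2 ∂P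

/-- The Voronoi region `M(a|α)`. -/
def voronoi (α : Set ℝ) (a : ℝ) : Set ℝ := {x : ℝ | ∀ b ∈ α, |x - a| ≤ |x - b|}
open Set

/-!
The invariance relation is an infinite sum, but with `tailMap x = x / 2 + 1 / 2` one has
`tailMap ∘ S k = S (k + 1)` for `k ≥ 1` and `p (k + 1) = p k / 2` for `k ≥ 2`, so it collapses to
the finite relation `P = ¼ (S 1)₊P + ¼ (S 2)₊P + ½ tailMap₊P`. Integrating `x` and `x²` against it
gives `∫ x dP = 4/7` and `∫ x² dP = 208/511`. The intervals `S j [0,1]` are pairwise disjoint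
and `P` lives on `[0,1]`, so `P` restricted to `S j [0,1]` is `p j • (S j)₊P`; hence the integral
of `(x - c)²` over any interval built from basic intervals is an explicit quadratic in `c`, and
the gaps between basic intervals are `P`-null.

On `J₂` the boundary `(a + 5/8)/2` between the two Voronoi cells falls into the null gap
`(37/64, 19/32)` exactly when `17/32 ≤ a ≤ 9/16`, and there the distortion is
`2403/10465280 + 15/64 (a - 11/20)²`. For `a < 17/32` (resp. `9/16 < a ≤ 37/64`) the integrand
still dominates `(x - 17/32)²` on `J₂₂` (resp. `(x - 37/64)²` on `J₂₃`), and for `a > 37/64` the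
cell of `a` alone already costs more than `2403/10465280`.
-/

lemma s_pos (j : ℕ) : 0 < s j := by
  unfold s; positivity

lemma p_nonneg (j : ℕ) : 0 ≤ p j := by
  unfold p; split_ifs <;> positivity

lemma S_eq_affine (j : ℕ) (x : ℝ) : S j x = s j * x + (1 - 1 / 2 ^ (j - 1)) := by
  simp only [S, s]; ring

lemma S_sub_S (j : ℕ) (x y : ℝ) : S j x - S j y = s j * (x - y) := by
  rw [S_eq_affine, S_eq_affine]; ring

lemma strictMono_S (j : ℕ) : StrictMono (S j) := fun x y h => by
  rw [← sub_pos, S_sub_S]; exact mul_pos (s_pos j) (sub_pos.mpr h)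

lemma continuous_S (j : ℕ) : Continuous (S j) := by
  unfold S; fun_prop

lemma measurableEmbedding_S (j : ℕ) : MeasurableEmbedding (S j) := by
  have : S j = (· + (1 - 1 / 2 ^ (j - 1))) ∘ (s j * ·) := funext (S_eq_affine j)
  rw [this]
  exact (measurableEmbedding_addRight _).comp (measurableEmbedding_mulLeft₀ (s_pos j).ne')

lemma image_S_Icc (j : ℕ) (u v : ℝ) : S j '' Icc u v = Icc (S j u) (S j v) := by
  have : S j = (s j * · + (1 - 1 / 2 ^ (j - 1))) := funext (S_eq_affine j)
  rw [this, image_affine_Icc' (s_pos j)]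

lemma image_S_Ioo (j : ℕ) (u v : ℝ) : S j '' Ioo u v = Ioo (S j u) (S j v) := by
  have : S j = (s j * · + (1 - 1 / 2 ^ (j - 1))) := funext (S_eq_affine j)
  rw [this, image_affine_Ioo (s_pos j)]

lemma S_one_lt_S_zero {k j : ℕ} (hk : 1 ≤ k) (hkj : k < j) : S k 1 < S j 0 := by
  obtain ⟨m, rfl⟩ : ∃ m, k = m + 1 := ⟨k - 1, by omega⟩
  obtain ⟨n, rfl⟩ : ∃ n, j = m + 2 + n := ⟨j - (m + 2), by omega⟩
  have hq : (0 : ℝ) < 1 / 2 ^ m := by positivity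
  have hle : 1 / (2 : ℝ) ^ (m + 1 + n) ≤ 1 / 2 ^ m / 2 := by
    rw [div_div, ← pow_succ]
    exact one_div_le_one_div_of_le (by positivity) (pow_le_pow_right₀ one_le_two (by omega))
  have hS1 : S (m + 1) 1 = 1 / 2 ^ m / 4 + 1 - 1 / 2 ^ m := by
    simp only [S, Nat.add_sub_cancel]; field_simp; ring
  have hS0 : S (m + 2 + n) 0 = 1 - 1 / 2 ^ (m + 1 + n) := by
    simp only [S, show m + 2 + n - 1 = m + 1 + n by omega]; ring
  rw [hS1, hS0]
  linarith

lemma disjoint_image_S_Icc {i k : ℕ} (hi : 1 ≤ i) (hk : 1 ≤ k) (hik : i ≠ k) :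
    Disjoint (S i '' Icc 0 1) (S k '' Icc 0 1) := by
  wlog h : i < k generalizing i k
  · exact (this hk hi hik.symm (by omega)).symm
  rw [image_S_Icc, image_S_Icc]
  exact Set.disjoint_left.mpr fun x hx hx' => by linarith [hx.2, hx'.1, S_one_lt_S_zero hi h]

def tailMap (x : ℝ) : ℝ := 1 / 2 * x + 1 / 2

lemma continuous_tailMap : Continuous tailMap := by
  unfold tailMap; fun_prop

lemma tailMap_S {k : ℕ} (hk : 1 ≤ k) (x : ℝ) : tailMap (S k x) = S (k + 1) x := by
  obtain ⟨m, rfl⟩ : ∃ m, k = m + 1 := ⟨k - 1, by omega⟩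
  simp only [tailMap, S, Nat.add_sub_cancel, pow_succ]
  field_simp
  ring

lemma p_succ {k : ℕ} (hk : 2 ≤ k) : p (k + 1) = 1 / 2 * p k := by
  simp only [p, if_neg (show k + 1 ≠ 1 by omega), if_neg (show k ≠ 1 by omega), pow_succ]
  ring

lemma integral_mul_add {μ : Measure ℝ} [IsProbabilityMeasure μ]
    (h : Integrable (fun x => x) μ) (a b : ℝ) :
    ∫ x, (a * x + b) ∂μ = a * ∫ x, x ∂μ + b := by
  rw [integral_add (h.const_mul a) (integrable_const b), integral_const_mul]
  simp

lemma integral_mul_add_sq {μ : Measure ℝ} [IsProbabilityMeasure μ]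
    (h₁ : Integrable (fun x => x) μ) (h₂ : Integrable (fun x => x ^ 2) μ) (a b : ℝ) :
    ∫ x, (a * x + b) ^ 2 ∂μ = a ^ 2 * ∫ x, x ^ 2 ∂μ + 2 * a * b * ∫ x, x ∂μ + b ^ 2 := by
  have : (fun x => (a * x + b) ^ 2) = fun x => a ^ 2 * x ^ 2 + (2 * a * b * x + b ^ 2) := by
    ext x; ring
  have h₃ : Integrable (fun x => 2 * a * b * x + b ^ 2) μ :=
    (h₁.const_mul _).add (integrable_const _)
  rw [this, integral_add (h₂.const_mul _) h₃, integral_mul_add h₁, integral_const_mul]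
  ring

lemma setIntegral_Icc_eq_add_of_measure_Ioo_eq_zero {μ : Measure ℝ} {f : ℝ → ℝ} {a b c d : ℝ}
    (hab : a ≤ b) (hbc : b < c) (hcd : c ≤ d) (hgap : μ (Ioo b c) = 0)
    (hf : IntegrableOn f (Icc a d) μ) :
    ∫ x in Icc a d, f x ∂μ = ∫ x in Icc a b, f x ∂μ + ∫ x in Icc c d, f x ∂μ := by
  have hIco : Ico a c ⊆ Icc a d := Ico_subset_Icc_self.trans (Icc_subset_Icc le_rfl hcd)
  rw [← Ico_union_Icc_eq_Icc (hab.trans hbc.le) hcd, setIntegral_union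
      (Set.disjoint_left.mpr fun x hx hx' => by linarith [hx.2, hx'.1]) measurableSet_Icc
      (hf.mono_set hIco) (hf.mono_set (Icc_subset_Icc (hab.trans hbc.le) le_rfl)),
    ← Icc_union_Ioo_eq_Ico hab hbc, setIntegral_union (s := Icc a b) (t := Ioo b c)
      (Set.disjoint_left.mpr fun x hx hx' => by linarith [hx.2, hx'.1]) measurableSet_Ioo
      (hf.mono_set ((Icc_subset_Ico_right hbc).trans hIco))
      (hf.mono_set ((Ioo_subset_Ico_self.trans (Ico_subset_Ico_left hab)).trans hIco)),
    setIntegral_measure_zero _ hgap, add_zero]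

lemma sq_sub_le_sq_sub_of_two_mul_le {x a b : ℝ} (hab : a ≤ b) (hx : 2 * x ≤ a + b) :
    (x - a) ^ 2 ≤ (x - b) ^ 2 := by
  nlinarith

lemma sq_sub_le_sq_sub_of_le_two_mul {x a b : ℝ} (hab : a ≤ b) (hx : a + b ≤ 2 * x) :
    (x - b) ^ 2 ≤ (x - a) ^ 2 := by
  nlinarith

section

variable {P : Measure ℝ}

lemma Invariant.eq_three_maps (hinv : Invariant P) :
    P = ENNReal.ofReal (1 / 4) • P.map (S 1) + ENNReal.ofReal (1 / 4) • P.map (S 2) +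
      ENNReal.ofReal (1 / 2) • P.map tailMap := by
  have hT := continuous_tailMap.measurable
  ext A hA
  simp only [Measure.add_apply, Measure.smul_apply, smul_eq_mul,
    Measure.map_apply (measurableEmbedding_S _).measurable hA, Measure.map_apply hT hA]
  have hpre : ∀ k : ℕ, S (k + 1) ⁻¹' (tailMap ⁻¹' A) = S (k + 2) ⁻¹' A := fun k => by
    rw [← preimage_comp]
    exact congrArg (· ⁻¹' A) (funext (tailMap_S (by omega)))
  have htail : ENNReal.ofReal (1 / 2) * ∑' k : ℕ, ENNReal.ofReal (p (k + 2)) * P (S (k + 3) ⁻¹' A)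
      = ∑' k : ℕ, ENNReal.ofReal (p (k + 3)) * P (S (k + 3) ⁻¹' A) := by
    rw [← ENNReal.tsum_mul_left]
    congr 1 with k
    rw [← mul_assoc, ← ENNReal.ofReal_mul (by norm_num), ← p_succ (by omega)]
  have hp2 : ENNReal.ofReal (p 2)
      = ENNReal.ofReal (1 / 4) + ENNReal.ofReal (1 / 2) * ENNReal.ofReal (p 1) := by
    rw [← ENNReal.ofReal_mul (by norm_num), ← ENNReal.ofReal_add (by norm_num) (by norm_num [p])]
    norm_num [p]
  have hL : ∑' k : ℕ, ENNReal.ofReal (p (k + 1)) * P (S (k + 1) ⁻¹' A)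
      = ENNReal.ofReal (p 1) * P (S 1 ⁻¹' A) + ENNReal.ofReal (p 2) * P (S 2 ⁻¹' A)
        + ∑' k : ℕ, ENNReal.ofReal (p (k + 3)) * P (S (k + 3) ⁻¹' A) := by
    rw [tsum_eq_zero_add' ENNReal.summable, tsum_eq_zero_add' ENNReal.summable]
    exact (add_assoc _ _ _).symm
  have hR : ∑' k : ℕ, ENNReal.ofReal (p (k + 1)) * P (S (k + 2) ⁻¹' A)
      = ENNReal.ofReal (p 1) * P (S 2 ⁻¹' A)
        + ∑' k : ℕ, ENNReal.ofReal (p (k + 2)) * P (S (k + 3) ⁻¹' A) :=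
    tsum_eq_zero_add' ENNReal.summable
  rw [hinv A hA, hinv _ (hT hA)]
  simp only [hpre]
  rw [hL, hR, mul_add, htail, hp2, show p 1 = 1 / 4 by norm_num [p]]
  ring

lemma measure_preimage_S_eq_zero (hsupp : ∀ᵐ x ∂P, x ∈ Icc (0 : ℝ) 1) {k : ℕ} {A : Set ℝ}
    (h : Disjoint A (S k '' Icc 0 1)) : P (S k ⁻¹' A) = 0 :=
  measure_eq_zero_iff_ae_notMem.mpr <| hsupp.mono fun _ hx hxA =>
    Set.disjoint_left.mp h hxA (mem_image_of_mem _ hx)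

lemma measure_eq_zero_of_disjoint_image_S (hsupp : ∀ᵐ x ∂P, x ∈ Icc (0 : ℝ) 1)
    (hinv : Invariant P) {A : Set ℝ} (hA : MeasurableSet A)
    (h : ∀ k, 1 ≤ k → Disjoint A (S k '' Icc 0 1)) : P A = 0 := by
  rw [hinv A hA]
  exact ENNReal.tsum_eq_zero.mpr fun k => by
    rw [measure_preimage_S_eq_zero hsupp (h (k + 1) (by omega)), mul_zero]

lemma measure_Ioo_S_one_S_zero (hsupp : ∀ᵐ x ∂P, x ∈ Icc (0 : ℝ) 1) (hinv : Invariant P)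
    {k : ℕ} (hk : 1 ≤ k) : P (Ioo (S k 1) (S (k + 1) 0)) = 0 := by
  refine measure_eq_zero_of_disjoint_image_S hsupp hinv measurableSet_Ioo fun i hi => ?_
  rw [image_S_Icc]
  refine Set.disjoint_left.mpr fun x hx hx' => ?_
  rcases lt_trichotomy i k with hik | rfl | hik
  · linarith [hx.1, hx'.2, S_one_lt_S_zero hi hik, (strictMono_S k).monotone zero_le_one]
  · linarith [hx.1, hx'.2]
  · rcases (Nat.succ_le_of_lt hik).eq_or_lt with rfl | hik'
    · linarith [hx.2, hx'.1]
    · linarith [hx.2, hx'.1, S_one_lt_S_zero (by omega) hik',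
        (strictMono_S (k + 1)).monotone zero_le_one]

lemma restrict_image_S_Icc (hsupp : ∀ᵐ x ∂P, x ∈ Icc (0 : ℝ) 1) (hinv : Invariant P)
    {j : ℕ} (hj : 1 ≤ j) :
    P.restrict (S j '' Icc 0 1) = ENNReal.ofReal (p j) • P.map (S j) := by
  have hJ : MeasurableSet (S j '' Icc 0 1) := by rw [image_S_Icc]; exact measurableSet_Icc
  ext B hB
  rw [Measure.restrict_apply hB, hinv _ (hB.inter hJ), Measure.smul_apply,
    Measure.map_apply (measurableEmbedding_S j).measurable hB, smul_eq_mul]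
  obtain ⟨m, rfl⟩ : ∃ m, j = m + 1 := ⟨j - 1, by omega⟩
  rw [tsum_eq_single m fun k hk => by
    rw [measure_preimage_S_eq_zero hsupp (Disjoint.inter_left' B
      (disjoint_image_S_Icc hj (by omega) (by omega))), mul_zero]]
  rw [preimage_inter, (strictMono_S _).injective.preimage_image,
    measure_inter_conull (show P (Icc (0 : ℝ) 1)ᶜ = 0 from hsupp)]

lemma restrict_image_S (hsupp : ∀ᵐ x ∂P, x ∈ Icc (0 : ℝ) 1) (hinv : Invariant P)
    {j : ℕ} (hj : 1 ≤ j) {A : Set ℝ} (hA : A ⊆ Icc 0 1) :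
    P.restrict (S j '' A) = ENNReal.ofReal (p j) • (P.restrict A).map (S j) := by
  rw [← Measure.restrict_restrict_of_subset (image_mono hA), restrict_image_S_Icc hsupp hinv hj,
    Measure.restrict_smul, (measurableEmbedding_S j).restrict_map,
    (strictMono_S j).injective.preimage_image]

lemma measure_image_S (hsupp : ∀ᵐ x ∂P, x ∈ Icc (0 : ℝ) 1) (hinv : Invariant P)
    {j : ℕ} (hj : 1 ≤ j) {A : Set ℝ} (hA : A ⊆ Icc 0 1) :
    P (S j '' A) = ENNReal.ofReal (p j) * P A := by
  rw [← Measure.restrict_apply_univ, restrict_image_S hsupp hinv hj hA, Measure.smul_apply,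
    Measure.map_apply (measurableEmbedding_S j).measurable MeasurableSet.univ, preimage_univ,
    Measure.restrict_apply_univ, smul_eq_mul]

lemma setIntegral_image_S (hsupp : ∀ᵐ x ∂P, x ∈ Icc (0 : ℝ) 1) (hinv : Invariant P)
    {j : ℕ} (hj : 1 ≤ j) {A : Set ℝ} (hA : A ⊆ Icc 0 1) (f : ℝ → ℝ) :
    ∫ x in S j '' A, f x ∂P = p j * ∫ y in A, f (S j y) ∂P := by
  rw [restrict_image_S hsupp hinv hj hA, integral_smul_measure,
    (measurableEmbedding_S j).integral_map, ENNReal.toReal_ofReal (p_nonneg j), smul_eq_mul]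

lemma setIntegral_image_S_sq_sub (hsupp : ∀ᵐ x ∂P, x ∈ Icc (0 : ℝ) 1) (hinv : Invariant P)
    {j : ℕ} (hj : 1 ≤ j) {A : Set ℝ} (hA : A ⊆ Icc 0 1) {c c' : ℝ} (hc : S j c = c') :
    ∫ x in S j '' A, (x - c') ^ 2 ∂P = p j * s j ^ 2 * ∫ y in A, (y - c) ^ 2 ∂P := by
  simp_rw [setIntegral_image_S hsupp hinv hj hA, ← hc, S_sub_S, mul_pow, integral_const_mul,
    mul_assoc]

lemma setIntegral_Icc_sq_sub_of_S (hsupp : ∀ᵐ x ∂P, x ∈ Icc (0 : ℝ) 1) (hinv : Invariant P)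
    {j : ℕ} (hj : 1 ≤ j) {u v c u' v' c' : ℝ} (hu : 0 ≤ u) (hv : v ≤ 1)
    (hu' : S j u = u') (hv' : S j v = v') (hc' : S j c = c') :
    ∫ x in Icc u' v', (x - c') ^ 2 ∂P = p j * s j ^ 2 * ∫ y in Icc u v, (y - c) ^ 2 ∂P := by
  rw [← hu', ← hv', ← image_S_Icc,
    setIntegral_image_S_sq_sub hsupp hinv hj (Icc_subset_Icc hu hv) hc']

lemma measure_Ioo_of_S (hsupp : ∀ᵐ x ∂P, x ∈ Icc (0 : ℝ) 1) (hinv : Invariant P)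
    {j : ℕ} (hj : 1 ≤ j) {u v u' v' : ℝ} (hu : 0 ≤ u) (hv : v ≤ 1)
    (hu' : S j u = u') (hv' : S j v = v') :
    P (Ioo u' v') = ENNReal.ofReal (p j) * P (Ioo u v) := by
  rw [← hu', ← hv', ← image_S_Ioo,
    measure_image_S hsupp hinv hj (Ioo_subset_Icc_self.trans (Icc_subset_Icc hu hv))]

lemma measure_gap_J₂₂_J₂₃ (hsupp : ∀ᵐ x ∂P, x ∈ Icc (0 : ℝ) 1) (hinv : Invariant P) :
    P (Ioo (37 / 64) (19 / 32)) = 0 := by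
  have hgap := measure_Ioo_S_one_S_zero hsupp hinv (k := 2) (by norm_num)
  norm_num [S] at hgap
  rw [measure_Ioo_of_S hsupp hinv (j := 2) (u := 5 / 8) (v := 3 / 4)
    (u' := 37 / 64) (v' := 19 / 32) (by norm_num) (by norm_num) (by norm_num) (by norm_num [S])
    (by norm_num [S]), hgap, mul_zero]

lemma measure_gap_J₂₃_J₂₄ (hsupp : ∀ᵐ x ∂P, x ∈ Icc (0 : ℝ) 1) (hinv : Invariant P) :
    P (Ioo (77 / 128) (39 / 64)) = 0 := by
  have hgap := measure_Ioo_S_one_S_zero hsupp hinv (k := 3) (by norm_num)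
  norm_num [S] at hgap
  rw [measure_Ioo_of_S hsupp hinv (j := 2) (u := 13 / 16) (v := 7 / 8)
    (u' := 77 / 128) (v' := 39 / 64) (by norm_num) (by norm_num) (by norm_num) (by norm_num [S])
    (by norm_num [S]), hgap, mul_zero]

lemma setIntegral_Icc_zero_one (hsupp : ∀ᵐ x ∂P, x ∈ Icc (0 : ℝ) 1) (f : ℝ → ℝ) :
    ∫ x in Icc 0 1, f x ∂P = ∫ x, f x ∂P := by
  rw [Measure.restrict_eq_self_of_ae_mem hsupp]

lemma Continuous.integrable_of_ae_mem_Icc [IsFiniteMeasure P] {f : ℝ → ℝ} (hf : Continuous f)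
    (hsupp : ∀ᵐ x ∂P, x ∈ Icc (0 : ℝ) 1) : Integrable f P := by
  rw [← Measure.restrict_eq_self_of_ae_mem hsupp]
  exact hf.continuousOn.integrableOn_compact isCompact_Icc

lemma Invariant.integral_eq_three_maps [IsFiniteMeasure P] (hsupp : ∀ᵐ x ∂P, x ∈ Icc (0 : ℝ) 1)
    (hinv : Invariant P) {f : ℝ → ℝ} (hf : Continuous f) :
    ∫ x, f x ∂P = 1 / 4 * ∫ y, f (S 1 y) ∂P + 1 / 4 * ∫ y, f (S 2 y) ∂P
      + 1 / 2 * ∫ y, f (tailMap y) ∂P := by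
  have hint : ∀ {g : ℝ → ℝ}, Continuous g → ∀ c : ℝ,
      Integrable f (ENNReal.ofReal c • P.map g) := fun hg _ =>
    ((integrable_map_measure hf.aestronglyMeasurable hg.measurable.aemeasurable).mpr
      ((hf.comp hg).integrable_of_ae_mem_Icc hsupp)).smul_measure ENNReal.ofReal_ne_top
  conv_lhs => rw [hinv.eq_three_maps]
  rw [integral_add_measure ((hint (continuous_S 1) _).add_measure (hint (continuous_S 2) _))
      (hint continuous_tailMap _),
    integral_add_measure (hint (continuous_S 1) _) (hint (continuous_S 2) _)]
  simp only [integral_smul_measure, ENNReal.toReal_ofReal (by norm_num : (0 : ℝ) ≤ 1 / 4),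
    ENNReal.toReal_ofReal (by norm_num : (0 : ℝ) ≤ 1 / 2), smul_eq_mul,
    integral_map (continuous_S _).aemeasurable hf.aestronglyMeasurable,
    integral_map continuous_tailMap.aemeasurable hf.aestronglyMeasurable]

end

section

variable {P : Measure ℝ} [IsProbabilityMeasure P]

lemma integral_id_eq (hsupp : ∀ᵐ x ∂P, x ∈ Icc (0 : ℝ) 1) (hinv : Invariant P) :
    ∫ x, x ∂P = 4 / 7 := by
  have h := hinv.integral_eq_three_maps hsupp (f := fun x => x) continuous_id
  simp only [S_eq_affine, tailMap,
    integral_mul_add (continuous_id.integrable_of_ae_mem_Icc hsupp)] at h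
  norm_num [s] at h
  linarith

lemma integral_sq_eq (hsupp : ∀ᵐ x ∂P, x ∈ Icc (0 : ℝ) 1) (hinv : Invariant P) :
    ∫ x, x ^ 2 ∂P = 208 / 511 := by
  have h := hinv.integral_eq_three_maps hsupp (f := fun x => x ^ 2) (continuous_pow 2)
  simp only [S_eq_affine, tailMap,
    integral_mul_add_sq (continuous_id.integrable_of_ae_mem_Icc hsupp)
      ((continuous_pow 2).integrable_of_ae_mem_Icc hsupp), integral_id_eq hsupp hinv] at h
  norm_num [s] at h
  linarith

lemma integral_sq_sub (hsupp : ∀ᵐ x ∂P, x ∈ Icc (0 : ℝ) 1) (hinv : Invariant P) (c : ℝ) :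
    ∫ x, (x - c) ^ 2 ∂P = c ^ 2 - 8 / 7 * c + 208 / 511 := by
  have : (fun x => (x - c) ^ 2) = fun x => (1 * x + -c) ^ 2 := by ext x; ring
  rw [this, integral_mul_add_sq (continuous_id.integrable_of_ae_mem_Icc hsupp)
    ((continuous_pow 2).integrable_of_ae_mem_Icc hsupp), integral_id_eq hsupp hinv,
    integral_sq_eq hsupp hinv]
  ring

lemma setIntegral_Icc_zero_five_eighths_sq_sub (hsupp : ∀ᵐ x ∂P, x ∈ Icc (0 : ℝ) 1)
    (hinv : Invariant P) (c : ℝ) :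
    ∫ x in Icc 0 (5 / 8), (x - c) ^ 2 ∂P = 5 / 8 * c ^ 2 - 1 / 2 * c + 151 / 1168 := by
  have hgap := measure_Ioo_S_one_S_zero hsupp hinv le_rfl
  norm_num [S] at hgap
  rw [setIntegral_Icc_eq_add_of_measure_Ioo_eq_zero (by norm_num) (by norm_num) (by norm_num) hgap
      (Continuous.integrable_of_ae_mem_Icc (by fun_prop) hsupp).integrableOn,
    setIntegral_Icc_sq_sub_of_S hsupp hinv (j := 1) (u := 0) (v := 1) (c := 4 * c)
      (u' := 0) (v' := 1 / 4) (c' := c) le_rfl le_rfl le_rfl (by norm_num [S]) (by norm_num [S])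
      (by norm_num [S]),
    setIntegral_Icc_sq_sub_of_S hsupp hinv (j := 2) (u := 0) (v := 1) (c := 8 * c - 4)
      (u' := 1 / 2) (v' := 5 / 8) (c' := c) (by norm_num) le_rfl le_rfl (by norm_num [S])
      (by norm_num [S]) (by norm_num [S]; ring),
    setIntegral_Icc_zero_one hsupp, setIntegral_Icc_zero_one hsupp, integral_sq_sub hsupp hinv,
    integral_sq_sub hsupp hinv]
  norm_num [p, s]
  ring

lemma setIntegral_Icc_three_quarters_one_sq_sub (hsupp : ∀ᵐ x ∂P, x ∈ Icc (0 : ℝ) 1)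
    (hinv : Invariant P) (c : ℝ) :
    ∫ x in Icc (3 / 4) 1, (x - c) ^ 2 ∂P = 3 / 8 * c ^ 2 - 9 / 14 * c + 2271 / 8176 := by
  have hgap := measure_Ioo_S_one_S_zero hsupp hinv (k := 2) (by norm_num)
  norm_num [S] at hgap
  have h := setIntegral_Icc_eq_add_of_measure_Ioo_eq_zero (f := fun x => (x - c) ^ 2) (a := 0)
    (d := 1) (by norm_num) (by norm_num) (by norm_num) hgap
    (Continuous.integrable_of_ae_mem_Icc (by fun_prop) hsupp).integrableOn
  rw [setIntegral_Icc_zero_one hsupp, integral_sq_sub hsupp hinv,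
    setIntegral_Icc_zero_five_eighths_sq_sub hsupp hinv] at h
  linarith

/- In the paper's notation `J₂ = [1/2, 5/8]`, `J₂₁ = [1/2, 17/32]`, `J₂₂ = [9/16, 37/64]`,
`J₂₃ = [19/32, 77/128]`, and `J₂tail = [19/32, 5/8] = S 2 '' [3/4, 1]` is the hull of
`J₂₃ ∪ J₂₄ ∪ ⋯`. -/
lemma setIntegral_J₂₁J₂₂_sq_sub (hsupp : ∀ᵐ x ∂P, x ∈ Icc (0 : ℝ) 1) (hinv : Invariant P)
    (t : ℝ) :
    ∫ x in Icc (1 / 2) (37 / 64), (x - t) ^ 2 ∂P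
      = 15 / 64 * t ^ 2 - 33 / 128 * t + 42501 / 598016 := by
  rw [setIntegral_Icc_sq_sub_of_S hsupp hinv (j := 2) (u := 0) (v := 5 / 8) (c := 8 * t - 4)
      (u' := 1 / 2) (v' := 37 / 64) (c' := t) (by norm_num) le_rfl (by norm_num)
      (by norm_num [S]) (by norm_num [S]) (by norm_num [S]; ring),
    setIntegral_Icc_zero_five_eighths_sq_sub hsupp hinv]
  norm_num [p, s]
  ring

lemma setIntegral_J₂tail_sq_sub (hsupp : ∀ᵐ x ∂P, x ∈ Icc (0 : ℝ) 1) (hinv : Invariant P) :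
    ∫ x in Icc (19 / 32) (5 / 8), (x - 5 / 8) ^ 2 ∂P = 243 / 4186112 := by
  rw [setIntegral_Icc_sq_sub_of_S hsupp hinv (j := 2) (u := 3 / 4) (v := 1) (c := 1)
      (u' := 19 / 32) (v' := 5 / 8) (c' := 5 / 8) (by norm_num) (by norm_num) (by norm_num)
      (by norm_num [S]) (by norm_num [S]) (by norm_num [S]),
    setIntegral_Icc_three_quarters_one_sq_sub hsupp hinv]
  norm_num [p, s]

lemma setIntegral_J₂₂_sq_sub (hsupp : ∀ᵐ x ∂P, x ∈ Icc (0 : ℝ) 1) (hinv : Invariant P) :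
    ∫ x in Icc (9 / 16) (37 / 64), (x - 17 / 32) ^ 2 ∂P = 7695 / 33488896 := by
  rw [setIntegral_Icc_sq_sub_of_S hsupp hinv (j := 2) (u := 1 / 2) (v := 5 / 8) (c := 1 / 4)
      (u' := 9 / 16) (v' := 37 / 64) (c' := 17 / 32) (by norm_num) (by norm_num) (by norm_num)
      (by norm_num [S]) (by norm_num [S]) (by norm_num [S]),
    setIntegral_Icc_sq_sub_of_S hsupp hinv (j := 2) (u := 0) (v := 1) (c := -2)
      (u' := 1 / 2) (v' := 5 / 8) (c' := 1 / 4) (by norm_num) le_rfl le_rfl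
      (by norm_num [S]) (by norm_num [S]) (by norm_num [S]),
    setIntegral_Icc_zero_one hsupp, integral_sq_sub hsupp hinv]
  norm_num [p, s]

lemma setIntegral_J₂₃_sq_sub (hsupp : ∀ᵐ x ∂P, x ∈ Icc (0 : ℝ) 1) (hinv : Invariant P)
    {c c' : ℝ} (hc : S 2 (S 3 c) = c') :
    ∫ x in Icc (19 / 32) (77 / 128), (x - c') ^ 2 ∂P
      = 9 / 2097152 * (c ^ 2 - 8 / 7 * c + 208 / 511) := by
  rw [setIntegral_Icc_sq_sub_of_S hsupp hinv (j := 2) (u := 3 / 4) (v := 13 / 16) (c := S 3 c)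
      (u' := 19 / 32) (v' := 77 / 128) (c' := c') (by norm_num) (by norm_num) (by norm_num)
      (by norm_num [S]) (by norm_num [S]) hc,
    setIntegral_Icc_sq_sub_of_S hsupp hinv (j := 3) (u := 0) (v := 1) (c := c)
      (u' := 3 / 4) (v' := 13 / 16) (c' := S 3 c) (by norm_num) le_rfl le_rfl
      (by norm_num [S]) (by norm_num [S]) rfl,
    setIntegral_Icc_zero_one hsupp, integral_sq_sub hsupp hinv]
  norm_num [p, s]
  ring

lemma setIntegral_J₂_eq_add (hsupp : ∀ᵐ x ∂P, x ∈ Icc (0 : ℝ) 1) (hinv : Invariant P)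
    {f : ℝ → ℝ} (hf : Continuous f) :
    ∫ x in Icc (1 / 2) (5 / 8), f x ∂P
      = ∫ x in Icc (1 / 2) (37 / 64), f x ∂P + ∫ x in Icc (19 / 32) (5 / 8), f x ∂P :=
  setIntegral_Icc_eq_add_of_measure_Ioo_eq_zero (by norm_num) (by norm_num) (by norm_num)
    (measure_gap_J₂₂_J₂₃ hsupp hinv) (hf.integrable_of_ae_mem_Icc hsupp).integrableOn

lemma setIntegral_J₂tail_eq_add (hsupp : ∀ᵐ x ∂P, x ∈ Icc (0 : ℝ) 1) (hinv : Invariant P)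
    {f : ℝ → ℝ} (hf : Continuous f) :
    ∫ x in Icc (19 / 32) (5 / 8), f x ∂P
      = ∫ x in Icc (19 / 32) (77 / 128), f x ∂P + ∫ x in Icc (39 / 64) (5 / 8), f x ∂P :=
  setIntegral_Icc_eq_add_of_measure_Ioo_eq_zero (by norm_num) (by norm_num) (by norm_num)
    (measure_gap_J₂₃_J₂₄ hsupp hinv) (hf.integrable_of_ae_mem_Icc hsupp).integrableOn

variable {a : ℝ}

lemma setIntegral_J₂_min_eq (hsupp : ∀ᵐ x ∂P, x ∈ Icc (0 : ℝ) 1) (hinv : Invariant P)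
    (ha : 17 / 32 ≤ a) (ha' : a ≤ 9 / 16) :
    ∫ x in Icc (1 / 2) (5 / 8), min ((x - a) ^ 2) ((x - 5 / 8) ^ 2) ∂P
      = 2403 / 10465280 + 15 / 64 * (a - 11 / 20) ^ 2 := by
  have hL : ∫ x in Icc (1 / 2) (37 / 64), min ((x - a) ^ 2) ((x - 5 / 8) ^ 2) ∂P
      = ∫ x in Icc (1 / 2) (37 / 64), (x - a) ^ 2 ∂P :=
    setIntegral_congr_fun measurableSet_Icc fun x hx =>
      min_eq_left (sq_sub_le_sq_sub_of_two_mul_le (by linarith) (by linarith [hx.2]))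
  have hR : ∫ x in Icc (19 / 32) (5 / 8), min ((x - a) ^ 2) ((x - 5 / 8) ^ 2) ∂P
      = ∫ x in Icc (19 / 32) (5 / 8), (x - 5 / 8) ^ 2 ∂P :=
    setIntegral_congr_fun measurableSet_Icc fun x hx =>
      min_eq_right (sq_sub_le_sq_sub_of_le_two_mul (by linarith) (by linarith [hx.1]))
  rw [setIntegral_J₂_eq_add hsupp hinv (by fun_prop), hL, hR, setIntegral_J₂₁J₂₂_sq_sub hsupp hinv,
    setIntegral_J₂tail_sq_sub hsupp hinv]
  ring

lemma lt_setIntegral_J₂_min_of_le (hsupp : ∀ᵐ x ∂P, x ∈ Icc (0 : ℝ) 1) (hinv : Invariant P)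
    (ha : a ≤ 17 / 32) :
    2403 / 10465280 < ∫ x in Icc (1 / 2) (5 / 8), min ((x - a) ^ 2) ((x - 5 / 8) ^ 2) ∂P := by
  have hint : ∀ {f : ℝ → ℝ}, Continuous f → ∀ u v : ℝ, IntegrableOn f (Icc u v) P :=
    fun hf _ _ => (hf.integrable_of_ae_mem_Icc hsupp).integrableOn
  have hL : ∫ x in Icc (9 / 16) (37 / 64), (x - 17 / 32) ^ 2 ∂P
      ≤ ∫ x in Icc (1 / 2) (37 / 64), min ((x - a) ^ 2) ((x - 5 / 8) ^ 2) ∂P :=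
    calc _ ≤ ∫ x in Icc (9 / 16) (37 / 64), min ((x - a) ^ 2) ((x - 5 / 8) ^ 2) ∂P :=
          setIntegral_mono_on (hint (by fun_prop) _ _) (hint (by fun_prop) _ _) measurableSet_Icc
            fun x hx => le_min (sq_sub_le_sq_sub_of_le_two_mul ha (by linarith [hx.1]))
              (sq_sub_le_sq_sub_of_two_mul_le (by norm_num) (by linarith [hx.2]))
      _ ≤ _ := setIntegral_mono_set (hint (by fun_prop) _ _) (ae_of_all _ fun x => by positivity)
          (Icc_subset_Icc (by norm_num) le_rfl).eventuallyLE
  have hR : ∫ x in Icc (19 / 32) (5 / 8), min ((x - a) ^ 2) ((x - 5 / 8) ^ 2) ∂P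
      = ∫ x in Icc (19 / 32) (5 / 8), (x - 5 / 8) ^ 2 ∂P :=
    setIntegral_congr_fun measurableSet_Icc fun x hx =>
      min_eq_right (sq_sub_le_sq_sub_of_le_two_mul (by linarith) (by linarith [hx.1]))
  rw [setIntegral_J₂_eq_add hsupp hinv (by fun_prop), hR, setIntegral_J₂tail_sq_sub hsupp hinv]
  linarith [setIntegral_J₂₂_sq_sub hsupp hinv]

lemma lt_setIntegral_J₂_min_of_lt_of_le (hsupp : ∀ᵐ x ∂P, x ∈ Icc (0 : ℝ) 1)
    (hinv : Invariant P) (ha : 9 / 16 < a) (ha' : a ≤ 37 / 64) :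
    2403 / 10465280 < ∫ x in Icc (1 / 2) (5 / 8), min ((x - a) ^ 2) ((x - 5 / 8) ^ 2) ∂P := by
  have hL : ∫ x in Icc (1 / 2) (37 / 64), min ((x - a) ^ 2) ((x - 5 / 8) ^ 2) ∂P
      = ∫ x in Icc (1 / 2) (37 / 64), (x - a) ^ 2 ∂P :=
    setIntegral_congr_fun measurableSet_Icc fun x hx =>
      min_eq_left (sq_sub_le_sq_sub_of_two_mul_le (by linarith) (by linarith [hx.2]))
  have hJ₂₃ : ∫ x in Icc (19 / 32) (77 / 128), (x - 37 / 64) ^ 2 ∂P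
      ≤ ∫ x in Icc (19 / 32) (77 / 128), min ((x - a) ^ 2) ((x - 5 / 8) ^ 2) ∂P :=
    setIntegral_mono_on (Continuous.integrable_of_ae_mem_Icc (by fun_prop) hsupp).integrableOn
      (Continuous.integrable_of_ae_mem_Icc (by fun_prop) hsupp).integrableOn measurableSet_Icc
      fun x hx => le_min (sq_sub_le_sq_sub_of_le_two_mul ha' (by linarith [hx.1]))
        (sq_sub_le_sq_sub_of_two_mul_le (by norm_num) (by linarith [hx.2]))
  have hR : ∫ x in Icc (39 / 64) (5 / 8), min ((x - a) ^ 2) ((x - 5 / 8) ^ 2) ∂P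
      = ∫ x in Icc (39 / 64) (5 / 8), (x - 5 / 8) ^ 2 ∂P :=
    setIntegral_congr_fun measurableSet_Icc fun x hx =>
      min_eq_right (sq_sub_le_sq_sub_of_le_two_mul (by linarith) (by linarith [hx.1]))
  have hD := setIntegral_J₂tail_eq_add hsupp hinv (f := fun x => (x - 5 / 8) ^ 2) (by fun_prop)
  rw [setIntegral_J₂tail_sq_sub hsupp hinv,
    setIntegral_J₂₃_sq_sub hsupp hinv (c := 4) (by norm_num [S])] at hD
  rw [setIntegral_J₂_eq_add hsupp hinv (by fun_prop), hL,
    setIntegral_J₂tail_eq_add hsupp hinv (by fun_prop), hR, setIntegral_J₂₁J₂₂_sq_sub hsupp hinv]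
  rw [setIntegral_J₂₃_sq_sub hsupp hinv (c := -2) (by norm_num [S])] at hJ₂₃
  nlinarith

lemma lt_setIntegral_J₂_min_of_lt (hsupp : ∀ᵐ x ∂P, x ∈ Icc (0 : ℝ) 1) (hinv : Invariant P)
    (ha : 37 / 64 < a) (ha' : a ≤ 5 / 8) :
    2403 / 10465280 < ∫ x in Icc (1 / 2) (5 / 8), min ((x - a) ^ 2) ((x - 5 / 8) ^ 2) ∂P := by
  have hL : ∫ x in Icc (1 / 2) (37 / 64), min ((x - a) ^ 2) ((x - 5 / 8) ^ 2) ∂P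
      = ∫ x in Icc (1 / 2) (37 / 64), (x - a) ^ 2 ∂P :=
    setIntegral_congr_fun measurableSet_Icc fun x hx =>
      min_eq_left (sq_sub_le_sq_sub_of_two_mul_le ha' (by linarith [hx.2]))
  have hR : 0 ≤ ∫ x in Icc (19 / 32) (5 / 8), min ((x - a) ^ 2) ((x - 5 / 8) ^ 2) ∂P :=
    setIntegral_nonneg measurableSet_Icc fun x _ => by positivity
  rw [setIntegral_J₂_eq_add hsupp hinv (by fun_prop), hL, setIntegral_J₂₁J₂₂_sq_sub hsupp hinv]
  nlinarith

end

lemma Jw_two : Jw [2] = Icc (1 / 2) (5 / 8) := by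
  simp only [Jw, Sw, List.foldr, Function.comp_id, image_S_Icc]
  norm_num [S]

theorem stmt_9_general (P : Measure ℝ) [IsProbabilityMeasure P]
    (hsupp : P (Set.Icc 0 1) = 1) (hinv : Invariant P)
    (a : ℝ) (h2 : a < 5 / 8) :
    2403 / 10465280 ≤ ∫ x in Jw [2], min ((x - a) ^ 2) ((x - 5 / 8) ^ 2) ∂P ∧
    ((∫ x in Jw [2], min ((x - a) ^ 2) ((x - 5 / 8) ^ 2) ∂P) = 2403 / 10465280 ↔
      a = 11 / 20) := by
  have hsupp' : ∀ᵐ x ∂P, x ∈ Icc (0 : ℝ) 1 :=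
    mem_ae_iff.mpr ((prob_compl_eq_zero_iff measurableSet_Icc).mpr hsupp)
  have of_lt : ∀ {v : ℝ}, 2403 / 10465280 < v → a ≠ 11 / 20 →
      2403 / 10465280 ≤ v ∧ (v = 2403 / 10465280 ↔ a = 11 / 20) :=
    fun hv ha => ⟨hv.le, iff_of_false hv.ne' ha⟩
  rw [Jw_two]
  rcases le_or_gt a (17 / 32) with h₁ | h₁
  · exact of_lt (lt_setIntegral_J₂_min_of_le hsupp' hinv h₁) (by linarith)
  rcases le_or_gt a (9 / 16) with h₂ | h₂
  · rw [setIntegral_J₂_min_eq hsupp' hinv h₁.le h₂]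
    exact ⟨le_add_of_nonneg_right (by positivity), by simp [sub_eq_zero]⟩
  rcases le_or_gt a (37 / 64) with h₃ | h₃
  · exact of_lt (lt_setIntegral_J₂_min_of_lt_of_le hsupp' hinv h₂ h₃) (by linarith)
  · exact of_lt (lt_setIntegral_J₂_min_of_lt hsupp' hinv h₃ h2.le) (by linarith)

/-- For `1/2 ≤ a < 5/8`, the two-point distortion on `J₂` with the points `a` and `5/8`
is at least `2403/10465280`, with equality iff `a = 11/20`. -/
theorem stmt_9 (P : Measure ℝ) [IsProbabilityMeasure P]
    (hsupp : P (Set.Icc 0 1) = 1) (hinv : Invariant P)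
    (a : ℝ) (h1 : 1 / 2 ≤ a) (h2 : a < 5 / 8) :
    2403 / 10465280 ≤ ∫ x in Jw [2], min ((x - a) ^ 2) ((x - 5 / 8) ^ 2) ∂P ∧
    ((∫ x in Jw [2], min ((x - a) ^ 2) ((x - 5 / 8) ^ 2) ∂P) = 2403 / 10465280 ↔
      a = 11 / 20) :=
  stmt_9_general P hsupp hinv a h2
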